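/- arXiv:2403.13764 — 3 statements merged into one kernel-verified Lean document; each statement's English description precedes it below -/
import Mathlib

section
/- If (x₁(ℓ), x₂(ℓ)) solves the Berger space Ricci flow ODE with eigenvalues r₁ = (8x₂² + x₁²)/(x₁x₂), r₂ = 5(8x₂ − x₁)/(4x₂), with initial value (2,1), then there is ε > 0 with x₁(ℓ) < 2x₂(ℓ) for ℓ ∈ (−ε,0) and x₁(ℓ) > 2x₂(ℓ) for ℓ ∈ (0,ε). -/
/-- If (x₁(ℓ), x₂(ℓ)) solves the Berger space Ricci flow ODE with eigenvalues
r₁ = (8x₂² + x₁²)/(x₁x₂), r₂ = 5(8x₂ − x₁)/(4x₂) and initial value (2,1), then there is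
ε > 0 with x₁ < 2x₂ on (−ε,0) and x₁ > 2x₂ on (0,ε). -/
theorem stmt3 (x1 x2 : ℝ → ℝ)
    (h1 : ∀ ℓ, 0 < x1 ℓ) (h2 : ∀ ℓ, 0 < x2 ℓ)
    (hd1 : ∀ ℓ, HasDerivAt x1 (-2 * ((8 * x2 ℓ ^ 2 + x1 ℓ ^ 2) / (x1 ℓ * x2 ℓ)) * x1 ℓ) ℓ)
    (hd2 : ∀ ℓ, HasDerivAt x2 (-2 * (5 * (8 * x2 ℓ - x1 ℓ) / (4 * x2 ℓ)) * x2 ℓ) ℓ)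
    (h10 : x1 0 = 2) (h20 : x2 0 = 1) :
    ∃ ε > (0:ℝ), (∀ ℓ ∈ Set.Ioo (-ε) 0, x1 ℓ < 2 * x2 ℓ) ∧
      ∀ ℓ ∈ Set.Ioo 0 ε, x1 ℓ > 2 * x2 ℓ := by
  set f : ℝ → ℝ := fun ℓ => x1 ℓ - 2 * x2 ℓ with hf
  have hf0 : f 0 = 0 := by simp [hf, h10, h20]
  have hdf : HasDerivAt f 6 0 := by
    have := (hd1 0).sub ((hd2 0).const_mul 2)
    refine this.congr_deriv ?_
    rw [h10, h20]; norm_num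
  have hslope : Filter.Tendsto (slope f 0) (nhdsWithin 0 {(0:ℝ)}ᶜ) (nhds 6) :=
    hasDerivAt_iff_tendsto_slope.mp hdf
  have hev : ∀ᶠ ℓ in nhdsWithin 0 {(0:ℝ)}ᶜ, 0 < slope f 0 ℓ :=
    hslope.eventually (eventually_gt_nhds (by norm_num))
  obtain ⟨ε, hε, hball⟩ := Metric.nhdsWithin_basis_ball.eventually_iff.mp hev
  refine ⟨ε, hε, ?_, ?_⟩
  · intro ℓ hℓ
    have hne : ℓ ≠ 0 := ne_of_lt hℓ.2
    have hd : dist ℓ 0 < ε := by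
      rw [Real.dist_eq, sub_zero, abs_of_neg hℓ.2]
      linarith [hℓ.1]
    have := hball ⟨Metric.mem_ball.mpr hd, by simpa using hne⟩
    rw [slope_def_field, div_pos_iff] at this
    rcases this with ⟨h, h'⟩ | ⟨h, h'⟩
    · linarith [hℓ.2]
    · simp only [hf0, sub_zero, hf] at h; linarith
  · intro ℓ hℓ
    have hne : ℓ ≠ 0 := ne_of_gt hℓ.1
    have hd : dist ℓ 0 < ε := by
      rw [Real.dist_eq, sub_zero, abs_of_pos hℓ.1]
      exact hℓ.2
    have := hball ⟨Metric.mem_ball.mpr hd, by simpa using hne⟩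
    rw [slope_def_field, div_pos_iff] at this
    rcases this with ⟨h, h'⟩ | ⟨h, h'⟩
    · simp only [hf0, sub_zero, hf] at h; linarith
    · linarith [hℓ.1]
end

section
/- For positive reals x, s with x < s, letting Ã be as above and v = (−2/(x√6), 1/(s√6), 1/(s√6)), one has Ã⁻¹v = (1/(√6(s−x)(4s−x)))·(sx − 2s², −s², −s²)ᵗ, and consequently t_A(x,s,s) := (2/9)⟨v, Ã⁻¹v⟩⁻¹ = x(4s − x)/(3s). -/
/-!
Up to the common factor `1/√6`, the vector `v` is `v₀ = (-2/x, 1/s, 1/s)`, and one checks directly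
that `Ã` maps `w₀ = (sx - 2s², -s², -s²) / ((s-x)(4s-x))` to `v₀`. Since
`det Ã = 12 (s-x)² (4s-x) / (x s⁵) ≠ 0`, this gives `Ã⁻¹ v₀ = w₀`, and then
`⟨v, Ã⁻¹v⟩ = ⟨v₀, w₀⟩ / 6 = 2s / (3x(4s-x))`.
-/

open Matrix

-- Püttmann's `Ã(x,s,s)` and `v(x,s,s,1,1)`.
noncomputable def puettmannMatrix (x s : ℝ) : Matrix (Fin 3) (Fin 3) ℝ :=
  !![4 / x, (x - 3 * s) / s ^ 2, (x - 3 * s) / s ^ 2;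
     (x - 3 * s) / s ^ 2, 4 / s, -2 / s;
     (x - 3 * s) / s ^ 2, -2 / s, 4 / s]

noncomputable def puettmannVector (x s : ℝ) : Fin 3 → ℝ :=
  ![-2 / (x * Real.sqrt 6), 1 / (s * Real.sqrt 6), 1 / (s * Real.sqrt 6)]

section

variable {x s : ℝ}

lemma det_puettmannMatrix (hx : x ≠ 0) (hs : s ≠ 0) :
    (puettmannMatrix x s).det = 12 * (s - x) ^ 2 * (4 * s - x) / (x * s ^ 5) := by
  simp [puettmannMatrix, det_fin_three]
  field_simp
  ring

lemma puettmannMatrix_mulVec (hx : x ≠ 0) (hs : s ≠ 0) :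
    puettmannMatrix x s *ᵥ ![s * x - 2 * s ^ 2, -s ^ 2, -s ^ 2] =
      ((s - x) * (4 * s - x)) • ![-2 / x, 1 / s, 1 / s] := by
  ext i
  fin_cases i <;>
    simp [puettmannMatrix, mulVec, dotProduct, Fin.sum_univ_three] <;>
    field_simp <;> ring

lemma inv_puettmannMatrix_mulVec (hx : x ≠ 0) (hs : s ≠ 0) (hsx : s - x ≠ 0)
    (h4sx : 4 * s - x ≠ 0) :
    (puettmannMatrix x s)⁻¹ *ᵥ ![-2 / x, 1 / s, 1 / s] =
      (1 / ((s - x) * (4 * s - x))) • ![s * x - 2 * s ^ 2, -s ^ 2, -s ^ 2] := by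
  have hdet : IsUnit (puettmannMatrix x s).det := by
    rw [det_puettmannMatrix hx hs, isUnit_iff_ne_zero]
    exact div_ne_zero (by simp [hsx, h4sx]) (by simp [hx, hs])
  let := (puettmannMatrix x s).invertibleOfIsUnitDet hdet
  refine inv_mulVec_eq_vec ?_
  rw [mulVec_smul, puettmannMatrix_mulVec hx hs, smul_smul,
    one_div_mul_cancel (mul_ne_zero hsx h4sx), one_smul]

lemma inv_puettmannMatrix_mulVec_puettmannVector (hx : x ≠ 0) (hs : s ≠ 0) (hsx : s - x ≠ 0)
    (h4sx : 4 * s - x ≠ 0) :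
    (puettmannMatrix x s)⁻¹ *ᵥ puettmannVector x s =
      (1 / (Real.sqrt 6 * (s - x) * (4 * s - x))) • ![s * x - 2 * s ^ 2, -s ^ 2, -s ^ 2] := by
  have hv : puettmannVector x s = (Real.sqrt 6)⁻¹ • ![-2 / x, 1 / s, 1 / s] := by
    ext i
    fin_cases i <;> simp [puettmannVector, field]
  rw [hv, mulVec_smul, inv_puettmannMatrix_mulVec hx hs hsx h4sx, smul_smul]
  congr 1
  field_simp

lemma puettmannVector_dotProduct_inv_mulVec (hx : x ≠ 0) (hs : s ≠ 0) (hsx : s - x ≠ 0)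
    (h4sx : 4 * s - x ≠ 0) :
    puettmannVector x s ⬝ᵥ (puettmannMatrix x s)⁻¹ *ᵥ puettmannVector x s =
      2 * s / (3 * x * (4 * s - x)) := by
  have h6 : Real.sqrt 6 ^ 2 = 6 := Real.sq_sqrt (by norm_num)
  rw [inv_puettmannMatrix_mulVec_puettmannVector hx hs hsx h4sx]
  simp [puettmannVector, dotProduct, Fin.sum_univ_three]
  field_simp
  rw [h6]
  ring

lemma criticalValue_eq (hx : x ≠ 0) (hs : s ≠ 0) (hsx : s - x ≠ 0) (h4sx : 4 * s - x ≠ 0) :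
    2 / 9 * (puettmannVector x s ⬝ᵥ (puettmannMatrix x s)⁻¹ *ᵥ puettmannVector x s)⁻¹ =
      x * (4 * s - x) / (3 * s) := by
  rw [puettmannVector_dotProduct_inv_mulVec hx hs hsx h4sx]
  field_simp
  ring

end

theorem stmt7_general (x s : ℝ) (hx : 0 < x) (hxs : x < s) :
    (!![4 / x, (x - 3 * s) / s ^ 2, (x - 3 * s) / s ^ 2;
        (x - 3 * s) / s ^ 2, 4 / s, -2 / s;
        (x - 3 * s) / s ^ 2, -2 / s, 4 / s] : Matrix (Fin 3) (Fin 3) ℝ)⁻¹.mulVec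
        ![-2 / (x * Real.sqrt 6), 1 / (s * Real.sqrt 6), 1 / (s * Real.sqrt 6)]
      = (1 / (Real.sqrt 6 * (s - x) * (4 * s - x))) •
          ![s * x - 2 * s ^ 2, -s ^ 2, -s ^ 2] ∧
    (2 / 9) * (dotProduct
        ![-2 / (x * Real.sqrt 6), 1 / (s * Real.sqrt 6), 1 / (s * Real.sqrt 6)]
        ((!![4 / x, (x - 3 * s) / s ^ 2, (x - 3 * s) / s ^ 2;
             (x - 3 * s) / s ^ 2, 4 / s, -2 / s;
             (x - 3 * s) / s ^ 2, -2 / s, 4 / s] : Matrix (Fin 3) (Fin 3) ℝ)⁻¹.mulVec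
          ![-2 / (x * Real.sqrt 6), 1 / (s * Real.sqrt 6), 1 / (s * Real.sqrt 6)]))⁻¹
      = x * (4 * s - x) / (3 * s) := by
  have hs : s ≠ 0 := (hx.trans hxs).ne'
  have hsx : s - x ≠ 0 := sub_ne_zero.2 hxs.ne'
  have h4sx : 4 * s - x ≠ 0 := by linarith
  exact ⟨inv_puettmannMatrix_mulVec_puettmannVector hx.ne' hs hsx h4sx,
    criticalValue_eq hx.ne' hs hsx h4sx⟩

/-- For 0 < x < s, with Ã = Ã(x,s,s) and v = (−2/(x√6), 1/(s√6), 1/(s√6)), one has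
Ã⁻¹v = (1/(√6(s−x)(4s−x)))·(sx − 2s², −s², −s²)ᵗ and hence
t_A(x,s,s) = (2/9)⟨v, Ã⁻¹v⟩⁻¹ = x(4s − x)/(3s). -/
theorem stmt7 (x s : ℝ) (hx : 0 < x) (hs : 0 < s) (hxs : x < s) :
    (!![4 / x, (x - 3 * s) / s ^ 2, (x - 3 * s) / s ^ 2;
        (x - 3 * s) / s ^ 2, 4 / s, -2 / s;
        (x - 3 * s) / s ^ 2, -2 / s, 4 / s] : Matrix (Fin 3) (Fin 3) ℝ)⁻¹.mulVec
        ![-2 / (x * Real.sqrt 6), 1 / (s * Real.sqrt 6), 1 / (s * Real.sqrt 6)]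
      = (1 / (Real.sqrt 6 * (s - x) * (4 * s - x))) •
          ![s * x - 2 * s ^ 2, -s ^ 2, -s ^ 2] ∧
    (2 / 9) * (dotProduct
        ![-2 / (x * Real.sqrt 6), 1 / (s * Real.sqrt 6), 1 / (s * Real.sqrt 6)]
        ((!![4 / x, (x - 3 * s) / s ^ 2, (x - 3 * s) / s ^ 2;
             (x - 3 * s) / s ^ 2, 4 / s, -2 / s;
             (x - 3 * s) / s ^ 2, -2 / s, 4 / s] : Matrix (Fin 3) (Fin 3) ℝ)⁻¹.mulVec
          ![-2 / (x * Real.sqrt 6), 1 / (s * Real.sqrt 6), 1 / (s * Real.sqrt 6)]))⁻¹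
      = x * (4 * s - x) / (3 * s) :=
  stmt7_general x s hx hxs
end

section
/- For ξ ∈ (0,1] and x ∈ (0,1), with W = Ã⁻¹(x,1,1)·v(x,1,1,ξ) where v(s₀,s₁,s₂,ξ) = (−(1+ξ)/(s₀√(2(ξ²+ξ+1))), ξ/(s₁√(2(ξ²+ξ+1))), 1/(s₂√(2(ξ²+ξ+1)))), one has ⟨v, W⟩ = (x²(ξ−1)² − 4x(ξ−1)² − 12(ξ+1)²)/(24x(x−4)(ξ²+ξ+1)). -/
/-!
Solving `Ã w = u` for `u = (-(1+ξ)/x, ξ, 1)` splits along the symmetry swapping the last two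
coordinates: the difference of the last two entries of `w` is `(ξ-1)/6`, and the first entry
and the sum of the last two solve a `2 × 2` system. The factor `x - 1` of `det Ã` then cancels
in `⟨u, w⟩`, and `v = u / √(2(ξ²+ξ+1))`.
-/

namespace AloffWallach

open Matrix

/-- The matrix `Ã(x,1,1)`. -/
noncomputable def tildeA (x : ℝ) : Matrix (Fin 3) (Fin 3) ℝ :=
  !![4 / x, x - 3, x - 3;
     x - 3, 4, -2;
     x - 3, -2, 4]

lemma det_tildeA {x : ℝ} (hx : x ≠ 0) : (tildeA x).det = -12 * (x - 1) ^ 2 * (x - 4) / x := by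
  rw [tildeA, det_fin_three]
  simp only [of_apply, cons_val', cons_val_zero, cons_val_one, cons_val_two, empty_val',
    cons_val_fin_one, head_cons, tail_cons, head_fin_const]
  field_simp
  ring

lemma isUnit_det_tildeA {x : ℝ} (hx0 : x ≠ 0) (hx1 : x ≠ 1) (hx4 : x ≠ 4) :
    IsUnit (tildeA x).det := by
  rw [det_tildeA hx0, isUnit_iff_ne_zero]
  have : x - 1 ≠ 0 := sub_ne_zero.mpr hx1
  have : x - 4 ≠ 0 := sub_ne_zero.mpr hx4
  positivity

lemma tildeA_mulVec {x : ℝ} (hx0 : x ≠ 0) (hx1 : x ≠ 1) (hx4 : x ≠ 4) (ξ : ℝ) :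
    tildeA x *ᵥ ![(ξ + 1) * (x - 2) / (2 * (x - 1) * (x - 4)),
        (-(ξ + 1) / ((x - 1) * (x - 4)) + (ξ - 1) / 6) / 2,
        (-(ξ + 1) / ((x - 1) * (x - 4)) - (ξ - 1) / 6) / 2]
      = ![-(1 + ξ) / x, ξ, 1] := by
  have : x - 1 ≠ 0 := sub_ne_zero.mpr hx1
  have : x - 4 ≠ 0 := sub_ne_zero.mpr hx4
  rw [tildeA, cons_mulVec, cons_mulVec, cons_mulVec, empty_mulVec, vec3_dotProduct',
    vec3_dotProduct', vec3_dotProduct']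
  refine vec3_eq ?_ ?_ ?_ <;> field_simp <;> ring

lemma inv_tildeA_mulVec {x : ℝ} (hx0 : x ≠ 0) (hx1 : x ≠ 1) (hx4 : x ≠ 4) (ξ : ℝ) :
    (tildeA x)⁻¹ *ᵥ ![-(1 + ξ) / x, ξ, 1]
      = ![(ξ + 1) * (x - 2) / (2 * (x - 1) * (x - 4)),
        (-(ξ + 1) / ((x - 1) * (x - 4)) + (ξ - 1) / 6) / 2,
        (-(ξ + 1) / ((x - 1) * (x - 4)) - (ξ - 1) / 6) / 2] := by
  rw [← tildeA_mulVec hx0 hx1 hx4 ξ, mulVec_mulVec,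
    nonsing_inv_mul _ (isUnit_det_tildeA hx0 hx1 hx4), one_mulVec]

lemma dotProduct_inv_tildeA_mulVec {x : ℝ} (hx0 : x ≠ 0) (hx1 : x ≠ 1) (hx4 : x ≠ 4)
    (ξ : ℝ) :
    ![-(1 + ξ) / x, ξ, 1] ⬝ᵥ (tildeA x)⁻¹ *ᵥ ![-(1 + ξ) / x, ξ, 1]
      = (ξ - 1) ^ 2 / 12 - (ξ + 1) ^ 2 / (x * (x - 4)) := by
  have : x - 1 ≠ 0 := sub_ne_zero.mpr hx1
  have : x - 4 ≠ 0 := sub_ne_zero.mpr hx4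
  rw [inv_tildeA_mulVec hx0 hx1 hx4, vec3_dotProduct']
  field_simp
  ring

end AloffWallach

theorem stmt12_general (ξ x : ℝ) (hx : x ∈ Set.Ioo (0:ℝ) 1) :
    dotProduct
        ![-(1 + ξ) / (x * Real.sqrt (2 * (ξ ^ 2 + ξ + 1))),
          ξ / (1 * Real.sqrt (2 * (ξ ^ 2 + ξ + 1))),
          1 / (1 * Real.sqrt (2 * (ξ ^ 2 + ξ + 1)))]
        ((!![4 / x, x - 3, x - 3;
             x - 3, 4, -2;
             x - 3, -2, 4] : Matrix (Fin 3) (Fin 3) ℝ)⁻¹.mulVec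
          ![-(1 + ξ) / (x * Real.sqrt (2 * (ξ ^ 2 + ξ + 1))),
            ξ / (1 * Real.sqrt (2 * (ξ ^ 2 + ξ + 1))),
            1 / (1 * Real.sqrt (2 * (ξ ^ 2 + ξ + 1)))])
      = (x ^ 2 * (ξ - 1) ^ 2 - 4 * x * (ξ - 1) ^ 2 - 12 * (ξ + 1) ^ 2) /
          (24 * x * (x - 4) * (ξ ^ 2 + ξ + 1)) := by
  obtain ⟨hx0, hx1⟩ := hx
  have hq : 0 < ξ ^ 2 + ξ + 1 := by nlinarith [sq_nonneg (ξ + 1 / 2)]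
  set s := Real.sqrt (2 * (ξ ^ 2 + ξ + 1))
  have hs : s ^ 2 = 2 * (ξ ^ 2 + ξ + 1) := Real.sq_sqrt (by positivity)
  have hv : ![-(1 + ξ) / (x * s), ξ / (1 * s), 1 / (1 * s)]
      = s⁻¹ • ![-(1 + ξ) / x, ξ, 1] := by
    rw [Matrix.smul_vec3]
    refine Matrix.vec3_eq ?_ ?_ ?_ <;> rw [smul_eq_mul] <;> ring
  change dotProduct _ ((AloffWallach.tildeA x)⁻¹.mulVec _) = _
  rw [hv, Matrix.mulVec_smul, dotProduct_smul, smul_dotProduct,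
    AloffWallach.dotProduct_inv_tildeA_mulVec hx0.ne' (by linarith) (by linarith),
    smul_eq_mul, smul_eq_mul, ← mul_assoc, ← mul_inv, ← sq, hs]
  have : x - 4 ≠ 0 := by linarith
  field_simp
  ring

/-- For ξ ∈ (0,1] and x ∈ (0,1), with Ã = Ã(x,1,1) and
v = (−(1+ξ)/(x√(2(ξ²+ξ+1))), ξ/√(2(ξ²+ξ+1)), 1/√(2(ξ²+ξ+1))), one has
⟨v, Ã⁻¹v⟩ = (x²(ξ−1)² − 4x(ξ−1)² − 12(ξ+1)²)/(24x(x−4)(ξ²+ξ+1)). -/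
theorem stmt12 (ξ x : ℝ) (hξ : ξ ∈ Set.Ioc (0:ℝ) 1) (hx : x ∈ Set.Ioo (0:ℝ) 1) :
    dotProduct
        ![-(1 + ξ) / (x * Real.sqrt (2 * (ξ ^ 2 + ξ + 1))),
          ξ / (1 * Real.sqrt (2 * (ξ ^ 2 + ξ + 1))),
          1 / (1 * Real.sqrt (2 * (ξ ^ 2 + ξ + 1)))]
        ((!![4 / x, x - 3, x - 3;
             x - 3, 4, -2;
             x - 3, -2, 4] : Matrix (Fin 3) (Fin 3) ℝ)⁻¹.mulVec
          ![-(1 + ξ) / (x * Real.sqrt (2 * (ξ ^ 2 + ξ + 1))),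
            ξ / (1 * Real.sqrt (2 * (ξ ^ 2 + ξ + 1))),
            1 / (1 * Real.sqrt (2 * (ξ ^ 2 + ξ + 1)))])
      = (x ^ 2 * (ξ - 1) ^ 2 - 4 * x * (ξ - 1) ^ 2 - 12 * (ξ + 1) ^ 2) /
          (24 * x * (x - 4) * (ξ ^ 2 + ξ + 1)) :=
  stmt12_general ξ x hx
end
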